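/- Let k be a field and F a finite subset of R = k[X_0,...,X_{m-1}] generating ideal I. The last fall degree d_F, defined as the minimal d in Z_{≥0} ∪ {∞} such that for all f in I one has f in V_{F, max(d, deg f)}, is finite: d_F is a nonnegative integer. -/

import Mathlib

/-- `VSpace F i` is the smallest `k`-subspace of `k[X_0,...,X_{m-1}]` containing all
`f ∈ F` of total degree at most `i`, and closed under multiplication by arbitrary
polynomials as long as the product has total degree at most `i`. -/
noncomputable def VSpace {k : Type*} [Field k] {m : ℕ} (F : Set (MvPolynomial (Fin m) k)) (i : ℕ) :
    Submodule k (MvPolynomial (Fin m) k) :=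
  sInf {W : Submodule k (MvPolynomial (Fin m) k) |
    (∀ f ∈ F, f.totalDegree ≤ i → f ∈ W) ∧
    ∀ g ∈ W, ∀ h : MvPolynomial (Fin m) k, (h * g).totalDegree ≤ i → h * g ∈ W}

/-- The last fall degree `d_F`: the minimal `d` such that every `f` in the ideal
generated by `F` lies in `VSpace F (max d (deg f))` (`sInf ∅ = 0` by convention). -/
noncomputable def lastFallDegree {k : Type*} [Field k] {m : ℕ}
    (F : Set (MvPolynomial (Fin m) k)) : ℕ :=
  sInf {d : ℕ | ∀ f ∈ Ideal.span F, f ∈ VSpace F (max d f.totalDegree)}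

/-!
Instead of a Gröbner basis we use an H-basis. By Hilbert's basis theorem the ideal spanned by the
leading forms (top-degree homogeneous components) of the elements of `I = (F)` is generated by the
leading forms of finitely many `g ∈ I`, and each `g` lies in some `VSpace F N_g`; let `c` be the
largest `N_g`. If `f ∈ I` has degree `n`, its leading form is `∑ a_g * leadingForm g` with `a_g`
homogeneous of degree `n - deg g`, so every `a_g * g` has degree at most `n` and lies in
`VSpace F (max c n)`, while `f - ∑ a_g * g ∈ I` is zero or has degree `< n`. Induction on `n`
concludes.
-/

namespace MvPolynomial

section

variable {σ R : Type*} [CommSemiring R]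

noncomputable def leadingForm (p : MvPolynomial σ R) : MvPolynomial σ R :=
  homogeneousComponent p.totalDegree p

lemma leadingForm_ne_zero {p : MvPolynomial σ R} (hp : p ≠ 0) : p.leadingForm ≠ 0 := by
  obtain ⟨d, hd, hdeg⟩ :=
    Finset.exists_mem_eq_sup p.support (support_nonempty.mpr hp) Finsupp.degree
  have hdeg' : d.degree = p.totalDegree := hdeg.symm
  intro h
  have := congrArg (coeff d) h
  rw [leadingForm, coeff_homogeneousComponent, if_pos hdeg', coeff_zero] at this
  exact mem_support_iff.mp hd this

lemma leadingForm_isHomogeneous (p : MvPolynomial σ R) :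
    p.leadingForm.IsHomogeneous p.totalDegree :=
  homogeneousComponent_isHomogeneous _ _

lemma totalDegree_lt_of_homogeneousComponent_eq_zero {p : MvPolynomial σ R} {n : ℕ}
    (hp : p ≠ 0) (hn : p.totalDegree ≤ n) (h : homogeneousComponent n p = 0) :
    p.totalDegree < n :=
  hn.lt_of_ne fun heq => leadingForm_ne_zero hp (by rwa [leadingForm, heq])

attribute [local instance] gradedAlgebra in
lemma homogeneousComponent_mul_of_isHomogeneous_right {b : MvPolynomial σ R} {j : ℕ}
    (hb : b.IsHomogeneous j) (a : MvPolynomial σ R) (n : ℕ) :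
    homogeneousComponent n (a * b) = if j ≤ n then homogeneousComponent (n - j) a * b else 0 := by
  simp only [← decomposition.decompose'_apply]
  exact DirectSum.coe_decompose_mul_of_right_mem (homogeneousSubmodule σ R) n hb

attribute [local instance] gradedAlgebra in
lemma homogeneousComponent_mul_of_isHomogeneous_left {a : MvPolynomial σ R} {j n : ℕ}
    (ha : a.IsHomogeneous j) (hjn : j ≤ n) (b : MvPolynomial σ R) :
    homogeneousComponent n (a * b) = a * homogeneousComponent (n - j) b := by
  simp only [← decomposition.decompose'_apply]
  exact DirectSum.coe_decompose_mul_of_left_mem_of_le (homogeneousSubmodule σ R) ha hjn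

lemma homogeneousComponent_mem_span_leadingForm {I : Ideal (MvPolynomial σ R)}
    {p : MvPolynomial σ R} (hp : p ∈ I) {n : ℕ} (hn : p.totalDegree ≤ n) :
    homogeneousComponent n p ∈ Ideal.span (leadingForm '' (I : Set (MvPolynomial σ R))) := by
  rcases hn.lt_or_eq with hlt | rfl
  · rw [homogeneousComponent_eq_zero _ _ hlt]
    exact zero_mem _
  · exact Ideal.subset_span ⟨p, hp, rfl⟩

lemma exists_sum_mul_homogeneousComponent_eq {ι : Type*} [Fintype ι]
    (g : ι → MvPolynomial σ R) {n : ℕ} {p : MvPolynomial σ R} (hp : p.IsHomogeneous n)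
    (hmem : p ∈ Ideal.span (Set.range fun i => (g i).leadingForm)) :
    ∃ c : ι → MvPolynomial σ R, (∀ i, (c i * g i).totalDegree ≤ n) ∧
      homogeneousComponent n (∑ i, c i * g i) = p := by
  classical
  obtain ⟨c₀, hc₀⟩ := Ideal.mem_span_range_iff_exists_fun.mp hmem
  set c : ι → MvPolynomial σ R := fun i =>
    if (g i).totalDegree ≤ n then homogeneousComponent (n - (g i).totalDegree) (c₀ i) else 0
  have hterm : ∀ i, (c i * g i).totalDegree ≤ n ∧
      homogeneousComponent n (c i * g i) = homogeneousComponent n (c₀ i * (g i).leadingForm) := by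
    intro i
    rw [homogeneousComponent_mul_of_isHomogeneous_right (leadingForm_isHomogeneous _)]
    by_cases hi : (g i).totalDegree ≤ n
    · have hci : (c i).IsHomogeneous (n - (g i).totalDegree) := by
        simpa only [c, if_pos hi] using homogeneousComponent_isHomogeneous _ _
      refine ⟨?_, ?_⟩
      · have := totalDegree_mul (c i) (g i)
        have := hci.totalDegree_le
        omega
      · rw [homogeneousComponent_mul_of_isHomogeneous_left hci (Nat.sub_le _ _),
          Nat.sub_sub_self hi, if_pos hi]
        simp only [c, if_pos hi, leadingForm]
    · simp [c, hi]
  refine ⟨c, fun i => (hterm i).1, ?_⟩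
  rw [map_sum, ← homogeneousComponent_eq_self hp, ← hc₀, map_sum]
  exact Finset.sum_congr rfl fun i _ => (hterm i).2

end

section

variable {σ R : Type*} [CommRing R]

lemma exists_finset_span_leadingForm_eq [IsNoetherianRing R] [Finite σ]
    (I : Ideal (MvPolynomial σ R)) :
    ∃ G : Finset (MvPolynomial σ R), ↑G ⊆ (I : Set (MvPolynomial σ R)) ∧
      Ideal.span (leadingForm '' G) =
        Ideal.span (leadingForm '' (I : Set (MvPolynomial σ R))) := by
  classical
  obtain ⟨s, hsI, hs⟩ := (Submodule.fg_span_iff_fg_span_finset_subset _).mp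
    (IsNoetherian.noetherian (Ideal.span (leadingForm '' (I : Set (MvPolynomial σ R)))))
  obtain ⟨G, hGI, rfl⟩ := Finset.subset_set_image_iff.mp hsI
  exact ⟨G, hGI, by rw [Finset.coe_image] at hs; exact hs.symm⟩

end

end MvPolynomial

open MvPolynomial

section VSpace

variable {k : Type*} [Field k] {m : ℕ} {F : Set (MvPolynomial (Fin m) k)}

lemma mem_VSpace_of_mem {i : ℕ} {f : MvPolynomial (Fin m) k} (hf : f ∈ F)
    (hi : f.totalDegree ≤ i) : f ∈ VSpace F i :=
  Submodule.mem_sInf.mpr fun _ hW => hW.1 f hf hi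

lemma mul_mem_VSpace {i : ℕ} {g : MvPolynomial (Fin m) k} (hg : g ∈ VSpace F i)
    (h : MvPolynomial (Fin m) k) (hi : (h * g).totalDegree ≤ i) : h * g ∈ VSpace F i :=
  Submodule.mem_sInf.mpr fun W hW => hW.2 g (Submodule.mem_sInf.mp hg W hW) h hi

lemma VSpace_mono : Monotone (VSpace F) := fun _ _ hij =>
  sInf_le_sInf fun _ ⟨hF, hmul⟩ =>
    ⟨fun f hf hi => hF f hf (hi.trans hij), fun g hg h hi => hmul g hg h (hi.trans hij)⟩

lemma exists_mem_VSpace_of_mem_span {f : MvPolynomial (Fin m) k} (hf : f ∈ Ideal.span F) :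
    ∃ N : ℕ, f ∈ VSpace F N := by
  induction hf using Submodule.span_induction with
  | mem x hx => exact ⟨x.totalDegree, mem_VSpace_of_mem hx le_rfl⟩
  | zero => exact ⟨0, zero_mem _⟩
  | add x y _ _ hx hy =>
    obtain ⟨N₁, hN₁⟩ := hx
    obtain ⟨N₂, hN₂⟩ := hy
    exact ⟨max N₁ N₂, add_mem (VSpace_mono (le_max_left _ _) hN₁)
      (VSpace_mono (le_max_right _ _) hN₂)⟩
  | smul a x _ hx =>
    obtain ⟨N, hN⟩ := hx
    exact ⟨max N (a * x).totalDegree,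
      mul_mem_VSpace (VSpace_mono (le_max_left _ _) hN) a (le_max_right _ _)⟩

theorem mem_VSpace_max_of_span_leadingForm {I : Ideal (MvPolynomial (Fin m) k)}
    {G : Finset (MvPolynomial (Fin m) k)} (hGI : ↑G ⊆ (I : Set (MvPolynomial (Fin m) k)))
    (hG : Ideal.span (leadingForm '' G) =
      Ideal.span (leadingForm '' (I : Set (MvPolynomial (Fin m) k))))
    {c : ℕ} (hGc : ∀ g ∈ G, g ∈ VSpace F c) {f : MvPolynomial (Fin m) k} (hf : f ∈ I) :
    f ∈ VSpace F (max c f.totalDegree) := by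
  suffices H : ∀ n, ∀ f ∈ I, f.totalDegree ≤ n → f ∈ VSpace F (max c n) from
    H _ f hf le_rfl
  intro n
  induction n using Nat.strong_induction_on with
  | _ n IH =>
    intro f hf hfn
    have htop : homogeneousComponent n f ∈
        Ideal.span (Set.range fun g : G => leadingForm (g : MvPolynomial (Fin m) k)) := by
      have hrange : Set.range (fun g : G => leadingForm (g : MvPolynomial (Fin m) k)) =
          leadingForm '' G := by
        ext; simp
      rw [hrange, hG]
      exact homogeneousComponent_mem_span_leadingForm hf hfn
    obtain ⟨a, ha, htop_eq⟩ :=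
      exists_sum_mul_homogeneousComponent_eq _ (homogeneousComponent_isHomogeneous n f) htop
    have hsum : ∑ g : G, a g * g ∈ VSpace F (max c n) :=
      sum_mem fun g _ => mul_mem_VSpace (VSpace_mono (le_max_left _ _) (hGc g g.2)) _
        ((ha g).trans (le_max_right _ _))
    set r := f - ∑ g : G, a g * g
    have hr : r ∈ VSpace F (max c n) := by
      by_cases hr0 : r = 0
      · rw [hr0]; exact zero_mem _
      have hrI : r ∈ I := sub_mem hf (sum_mem fun g _ => I.mul_mem_left _ (hGI g.2))
      have hrn : r.totalDegree ≤ n := by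
        refine (totalDegree_sub _ _).trans (max_le hfn ?_)
        exact (totalDegree_finsetSum _ _).trans (Finset.sup_le fun g _ => ha g)
      have hr_top : homogeneousComponent n r = 0 := by rw [map_sub, htop_eq, sub_self]
      have hlt := totalDegree_lt_of_homogeneousComponent_eq_zero hr0 hrn hr_top
      exact VSpace_mono (max_le_max le_rfl hlt.le) (IH _ hlt r hrI le_rfl)
    rw [← sub_add_cancel f (∑ g : G, a g * g)]
    exact add_mem hr hsum

end VSpace

theorem lastFallDegree_finite_general {k : Type*} [Field k] {m : ℕ}
    (F : Set (MvPolynomial (Fin m) k)) :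
    ∃ d : ℕ, ∀ f ∈ Ideal.span F, f ∈ VSpace F (max d f.totalDegree) := by
  obtain ⟨G, hGI, hG⟩ := exists_finset_span_leadingForm_eq (Ideal.span F)
  choose N hN using fun g : G => exists_mem_VSpace_of_mem_span (hGI g.2)
  have hGc : ∀ g ∈ G, g ∈ VSpace F (Finset.univ.sup N) := fun g hg =>
    VSpace_mono (Finset.le_sup (Finset.mem_univ (⟨g, hg⟩ : G))) (hN ⟨g, hg⟩)
  exact ⟨_, fun f hf => mem_VSpace_max_of_span_leadingForm hGI hG hGc hf⟩

/-- The last fall degree is finite: there is `d ∈ ℕ` such that every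
`f` in the ideal generated by `F` lies in `VSpace F (max d (deg f))`. -/
theorem lastFallDegree_finite {k : Type*} [Field k] {m : ℕ}
    (F : Set (MvPolynomial (Fin m) k)) (hF : F.Finite) :
    ∃ d : ℕ, ∀ f ∈ Ideal.span F, f ∈ VSpace F (max d f.totalDegree) :=
  lastFallDegree_finite_general F
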